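/- arXiv:2502.12919 — 4 statements merged into one kernel-verified Lean document; each statement's English description precedes it below -/
import Mathlib

section
/- The probability is strictly antitone on proper inclusions of flip sets when no branch probability equals 1/2: for Boolean sequences B₁, B₂ : Fin l → Bool, if F(B₁) is a proper subset of F(B₂) and pb u ≠ 1/2 for every u ∈ F(B₂) \ F(B₁), then P(B₂) < P(B₁). -/
open scoped Classical
open Finset

/-- The probability of a Boolean sequence `B`:
`P(B) = ∏ j, (if B j then pb j else 1 - pb j)`. -/
noncomputable def probSeq (l : ℕ) (pb : Fin l → ℝ) (B : Fin l → Bool) : ℝ :=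
  ∏ j, (if B j then pb j else 1 - pb j)

/-- The initial sequence `B⁰`, `B⁰ j = (pb j > 1/2)`. -/
noncomputable def initSeq (l : ℕ) (pb : Fin l → ℝ) : Fin l → Bool :=
  fun j => decide (pb j > 1 / 2)

/-- The flip set `F(B) = {j | B j ≠ B⁰ j}`. -/
noncomputable def flipSet (l : ℕ) (pb : Fin l → ℝ) (B : Fin l → Bool) : Finset (Fin l) :=
  Finset.univ.filter (fun j => B j ≠ initSeq l pb j)

/-- The flip ratio `V u = min (pb u) (1 - pb u) / max (pb u) (1 - pb u)`. -/
noncomputable def flipRatio (l : ℕ) (pb : Fin l → ℝ) (u : Fin l) : ℝ :=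
  min (pb u) (1 - pb u) / max (pb u) (1 - pb u)

/-!
Coordinate `j` contributes `max (pb j) (1 - pb j)` to `P(B)` when `B` agrees with `B⁰` at `j`
and `min (pb j) (1 - pb j)` when it is flipped there, since `B⁰` picks the likelier branch.
Enlarging the flip set therefore replaces some factors `max` by the no larger `min`, strictly
so where `pb j ≠ 1/2`.
-/

theorem Finset.prod_ite_mem_lt_of_subset {ι R : Type*} [Fintype ι] [DecidableEq ι]
    [CommMonoidWithZero R] [PartialOrder R] [ZeroLEOneClass R] [PosMulStrictMono R]
    [Nontrivial R] {g f : ι → R} {s t : Finset ι} (hg : ∀ i, 0 < g i) (hgf : ∀ i, g i ≤ f i)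
    (hst : s ⊆ t) (hlt : ∃ i ∈ t \ s, g i < f i) :
    ∏ i, (if i ∈ t then g i else f i) < ∏ i, (if i ∈ s then g i else f i) := by
  obtain ⟨i, hi, hgfi⟩ := hlt
  rw [mem_sdiff] at hi
  refine prod_lt_prod (fun j _ => ?_) (fun j _ => ?_) ⟨i, mem_univ i, by simpa [hi] using hgfi⟩
  · split_ifs
    exacts [hg j, (hg j).trans_le (hgf j)]
  · by_cases hjs : j ∈ s
    · simp [hjs, hst hjs]
    · split_ifs
      exacts [hgf j, le_rfl]

theorem probSeq_eq_prod_min_max (l : ℕ) (pb : Fin l → ℝ) (B : Fin l → Bool) :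
    probSeq l pb B = ∏ j, if j ∈ flipSet l pb B then min (pb j) (1 - pb j)
      else max (pb j) (1 - pb j) := by
  refine prod_congr rfl fun j _ => ?_
  have hflip : j ∈ flipSet l pb B ↔ B j ≠ initSeq l pb j := by simp [flipSet]
  by_cases hj : pb j > 1 / 2
  · have hinit : initSeq l pb j = true := decide_eq_true hj
    have hmax : max (pb j) (1 - pb j) = pb j := max_eq_left (by linarith)
    have hmin : min (pb j) (1 - pb j) = 1 - pb j := min_eq_right (by linarith)
    cases hB : B j <;> simp [hflip, hinit, hB, hmax, hmin]
  · have hinit : initSeq l pb j = false := decide_eq_false hj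
    have hmax : max (pb j) (1 - pb j) = 1 - pb j := max_eq_right (by linarith)
    have hmin : min (pb j) (1 - pb j) = pb j := min_eq_left (by linarith)
    cases hB : B j <;> simp [hflip, hinit, hB, hmax, hmin]

/-- the probability is strictly antitone on proper inclusions of flip sets
when no branch probability on the difference equals `1/2`. -/
theorem probSeq_strict_antitone_flipSet (l : ℕ) (pb : Fin l → ℝ)
    (hpb : ∀ j, 0 < pb j ∧ pb j < 1) (B₁ B₂ : Fin l → Bool)
    (hss : flipSet l pb B₁ ⊂ flipSet l pb B₂)
    (hhalf : ∀ u ∈ flipSet l pb B₂ \ flipSet l pb B₁, pb u ≠ 1 / 2) :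
    probSeq l pb B₂ < probSeq l pb B₁ := by
  obtain ⟨u, hu₂, hu₁⟩ := exists_of_ssubset hss
  have hu : u ∈ flipSet l pb B₂ \ flipSet l pb B₁ := mem_sdiff.2 ⟨hu₂, hu₁⟩
  have hmin_pos (j : Fin l) : 0 < min (pb j) (1 - pb j) :=
    lt_min (hpb j).1 (sub_pos.2 (hpb j).2)
  have hmin_lt_max : min (pb u) (1 - pb u) < max (pb u) (1 - pb u) :=
    min_lt_max.2 fun h => hhalf u hu (by linarith)
  rw [probSeq_eq_prod_min_max, probSeq_eq_prod_min_max]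
  exact prod_ite_mem_lt_of_subset hmin_pos (fun j => min_le_max) hss.subset ⟨u, hu, hmin_lt_max⟩
end

section
/- (Theorem 1.) Assume the probability map P is injective on Boolean sequences. Let a ≥ 2 with a ≤ 2^l, and let S be a set of Boolean sequences of cardinality a − 1 that consists of the top a − 1 sequences in the sense that P(B') < P(B) for every B ∈ S and every B' ∉ S. Let B_a ∉ S be a sequence maximizing P among sequences not in S (the a-th top sequence). Then there exists B ∈ S such that F(B) ⊆ F(B_a) and the difference F(B_a) \ F(B) has exactly one element; that is, B_a is obtained from some top-(a−1) sequence by flipping exactly one position from its initial state, with no position transitioning from flipped back to initial. -/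
/-! Unflipping a flipped position `u` of `B_a` back to its initial state strictly increases the
probability (strictly, because injectivity of `P` rules out `pb u = 1 / 2`), so the resulting
sequence has larger probability than the maximum outside `S` and therefore lies in `S`; its flip
set is `F(B_a)` with `u` removed. Such a `u` exists because `B⁰` maximizes `P`, so `B_a ≠ B⁰`. -/

open scoped Classical
open Finset

-- `probSeq l pb B` is definitionally `∏ j, bitProb (pb j) (B j)`.
def bitProb (p : ℝ) (b : Bool) : ℝ := if b then p else 1 - p

theorem bitProb_pos {p : ℝ} (hp : 0 < p ∧ p < 1) (b : Bool) : 0 < bitProb p b := by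
  cases b
  · simpa [bitProb] using hp.2
  · simpa [bitProb] using hp.1

theorem bitProb_le_bitProb_decide (p : ℝ) (b : Bool) :
    bitProb p b ≤ bitProb p (decide (p > 1 / 2)) := by
  by_cases hp : p > 1 / 2
  · rw [decide_eq_true hp]
    cases b <;> simp only [bitProb, Bool.false_eq_true, if_true, if_false] <;> linarith
  · rw [decide_eq_false hp]
    cases b <;> simp only [bitProb, Bool.false_eq_true, if_true, if_false] <;> linarith

theorem bitProb_lt_bitProb_decide {p : ℝ} (hp : p ≠ 1 / 2) {b : Bool}
    (hb : b ≠ decide (p > 1 / 2)) : bitProb p b < bitProb p (decide (p > 1 / 2)) := by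
  rcases hp.lt_or_gt with hlt | hgt
  · rw [decide_eq_false hlt.not_gt] at hb ⊢
    cases b
    · exact absurd rfl hb
    · simp only [bitProb, Bool.false_eq_true, if_true, if_false]
      linarith
  · rw [decide_eq_true hgt] at hb ⊢
    cases b
    · simp only [bitProb, Bool.false_eq_true, if_true, if_false]
      linarith
    · exact absurd rfl hb

theorem probSeq_le_initSeq (l : ℕ) (pb : Fin l → ℝ) (hpb : ∀ j, 0 < pb j ∧ pb j < 1)
    (B : Fin l → Bool) : probSeq l pb B ≤ probSeq l pb (initSeq l pb) :=
  prod_le_prod (fun j _ => (bitProb_pos (hpb j) _).le)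
    (fun j _ => bitProb_le_bitProb_decide (pb j) (B j))

/-- A position with `pb u = 1 / 2` could be flipped without changing the probability. -/
theorem ne_half_of_probSeq_injective (l : ℕ) (pb : Fin l → ℝ)
    (hinj : Function.Injective (probSeq l pb)) (u : Fin l) : pb u ≠ 1 / 2 := by
  intro hu
  have hprob : probSeq l pb (Function.update (fun _ => true) u false) =
      probSeq l pb (fun _ => true) := by
    refine prod_congr rfl fun j _ => ?_
    rcases eq_or_ne j u with rfl | hj
    · simp only [Function.update_self, hu]
      norm_num
    · simp only [Function.update_of_ne hj]
  simpa using congrFun (hinj hprob) u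

theorem probSeq_lt_update_initSeq (l : ℕ) (pb : Fin l → ℝ) (hpb : ∀ j, 0 < pb j ∧ pb j < 1)
    (hinj : Function.Injective (probSeq l pb)) {B : Fin l → Bool} {u : Fin l}
    (hu : u ∈ flipSet l pb B) :
    probSeq l pb B < probSeq l pb (Function.update B u (initSeq l pb u)) := by
  have hBu : B u ≠ initSeq l pb u := (mem_filter.mp hu).2
  refine prod_lt_prod (fun j _ => bitProb_pos (hpb j) _) (fun j _ => ?_) ⟨u, mem_univ u, ?_⟩
  · rcases eq_or_ne j u with rfl | hj
    · rw [Function.update_self]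
      exact bitProb_le_bitProb_decide _ _
    · rw [Function.update_of_ne hj]
  · rw [Function.update_self]
    exact bitProb_lt_bitProb_decide (ne_half_of_probSeq_injective l pb hinj u) hBu

theorem flipSet_update_initSeq (l : ℕ) (pb : Fin l → ℝ) (B : Fin l → Bool) (u : Fin l) :
    flipSet l pb (Function.update B u (initSeq l pb u)) = (flipSet l pb B).erase u := by
  ext j
  rcases eq_or_ne j u with rfl | hj
  · simp [flipSet]
  · simp [flipSet, hj]

theorem flipSet_nonempty_of_ne_initSeq (l : ℕ) (pb : Fin l → ℝ) {B : Fin l → Bool}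
    (hB : B ≠ initSeq l pb) : (flipSet l pb B).Nonempty := by
  obtain ⟨j, hj⟩ := Function.ne_iff.mp hB
  exact ⟨j, mem_filter.mpr ⟨mem_univ j, hj⟩⟩

theorem ath_top_from_one_flip_general (l : ℕ) (pb : Fin l → ℝ)
    (hpb : ∀ j, 0 < pb j ∧ pb j < 1)
    (hinj : Function.Injective (probSeq l pb))
    (a : ℕ) (ha2 : 2 ≤ a)
    (S : Finset (Fin l → Bool)) (hcard : S.card = a - 1)
    (htop : ∀ B ∈ S, ∀ B' ∉ S, probSeq l pb B' < probSeq l pb B)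
    (Ba : Fin l → Bool) (hBa : Ba ∉ S)
    (hmax : ∀ B' ∉ S, probSeq l pb B' ≤ probSeq l pb Ba) :
    ∃ B ∈ S, flipSet l pb B ⊆ flipSet l pb Ba ∧
      (flipSet l pb Ba \ flipSet l pb B).card = 1 := by
  obtain ⟨B₁, hB₁⟩ : S.Nonempty := card_pos.mp (by omega)
  have hBa_ne : Ba ≠ initSeq l pb := by
    rintro rfl
    exact (htop B₁ hB₁ _ hBa).not_ge (probSeq_le_initSeq l pb hpb B₁)
  obtain ⟨u, hu⟩ := flipSet_nonempty_of_ne_initSeq l pb hBa_ne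
  have hlt := probSeq_lt_update_initSeq l pb hpb hinj hu
  have hmem : Function.update Ba u (initSeq l pb u) ∈ S := by
    by_contra hnot
    exact (hmax _ hnot).not_gt hlt
  refine ⟨_, hmem, ?_, ?_⟩ <;> rw [flipSet_update_initSeq]
  · exact erase_subset u _
  · rw [sdiff_erase_self hu, card_singleton]

/-- Theorem 1: the `a`-th top sequence is obtained from some top-`(a-1)`
sequence by flipping exactly one position from its initial state, with no unflipping. -/
theorem ath_top_from_one_flip (l : ℕ) (pb : Fin l → ℝ)
    (hpb : ∀ j, 0 < pb j ∧ pb j < 1)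
    (hinj : Function.Injective (probSeq l pb))
    (a : ℕ) (ha2 : 2 ≤ a) (hal : a ≤ 2 ^ l)
    (S : Finset (Fin l → Bool)) (hcard : S.card = a - 1)
    (htop : ∀ B ∈ S, ∀ B' ∉ S, probSeq l pb B' < probSeq l pb B)
    (Ba : Fin l → Bool) (hBa : Ba ∉ S)
    (hmax : ∀ B' ∉ S, probSeq l pb B' ≤ probSeq l pb Ba) :
    ∃ B ∈ S, flipSet l pb B ⊆ flipSet l pb Ba ∧
      (flipSet l pb Ba \ flipSet l pb B).card = 1 :=
  ath_top_from_one_flip_general l pb hpb hinj a ha2 S hcard htop Ba hBa hmax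
end

section
/- Top sets are downward closed under inclusion of flip sets: assume the probability map P is injective on Boolean sequences, and let S be a set of Boolean sequences such that P(B') < P(B) for every B ∈ S and every B' ∉ S. Then for all Boolean sequences B₁, B₂, if B₂ ∈ S and F(B₁) ⊆ F(B₂), then B₁ ∈ S. -/
open scoped Classical
open Finset

/-! Where `B₁` and `B₂` disagree, `F(B₁) ⊆ F(B₂)` forces `B₁` to agree with `B⁰`, whose factor
`max (p, 1 - p)` is the larger one; hence `P(B₂) ≤ P(B₁)`, and a top set containing `B₂` cannot
leave out `B₁`. -/

section FlipSet

variable {l : ℕ} {pb : Fin l → ℝ}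

theorem ite_le_ite_initSeq (b : Bool) (j : Fin l) :
    (if b then pb j else 1 - pb j) ≤ if initSeq l pb j then pb j else 1 - pb j := by
  simp only [initSeq, decide_eq_true_eq]
  cases b <;> split_ifs <;> linarith

theorem ite_nonneg_of_mem_Icc (b : Bool) {p : ℝ} (hp : 0 ≤ p ∧ p ≤ 1) :
    0 ≤ if b then p else 1 - p := by
  split_ifs <;> linarith [hp.1, hp.2]

theorem eq_initSeq_of_ne_of_flipSet_subset {B₁ B₂ : Fin l → Bool}
    (hsub : flipSet l pb B₁ ⊆ flipSet l pb B₂) {j : Fin l} (hj : B₁ j ≠ B₂ j) :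
    B₁ j = initSeq l pb j := by
  by_contra hflip
  have hflip₂ : B₂ j ≠ initSeq l pb j := by
    simpa [flipSet] using hsub (by simpa [flipSet] using hflip)
  revert hj hflip hflip₂
  cases B₁ j <;> cases B₂ j <;> cases initSeq l pb j <;> decide

theorem probSeq_le_of_flipSet_subset (hpb : ∀ j, 0 ≤ pb j ∧ pb j ≤ 1)
    {B₁ B₂ : Fin l → Bool} (hsub : flipSet l pb B₁ ⊆ flipSet l pb B₂) :
    probSeq l pb B₂ ≤ probSeq l pb B₁ := by
  refine prod_le_prod (fun j _ => ite_nonneg_of_mem_Icc _ (hpb j)) fun j _ => ?_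
  by_cases hj : B₁ j = B₂ j
  · rw [hj]
  · rw [eq_initSeq_of_ne_of_flipSet_subset hsub hj]
    exact ite_le_ite_initSeq _ j

end FlipSet

theorem top_set_downward_closed_general (l : ℕ) (pb : Fin l → ℝ)
    (hpb : ∀ j, 0 < pb j ∧ pb j < 1)
    (S : Set (Fin l → Bool))
    (htop : ∀ B ∈ S, ∀ B' ∉ S, probSeq l pb B' < probSeq l pb B) :
    ∀ B₁ B₂ : Fin l → Bool, B₂ ∈ S → flipSet l pb B₁ ⊆ flipSet l pb B₂ → B₁ ∈ S := by
  intro B₁ B₂ hB₂ hsub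
  by_contra hB₁
  have hle := probSeq_le_of_flipSet_subset (fun j => ⟨(hpb j).1.le, (hpb j).2.le⟩) hsub
  exact (htop B₂ hB₂ B₁ hB₁).not_ge hle

/-- top sets are downward closed under inclusion of flip sets. -/
theorem top_set_downward_closed (l : ℕ) (pb : Fin l → ℝ)
    (hpb : ∀ j, 0 < pb j ∧ pb j < 1)
    (hinj : Function.Injective (probSeq l pb))
    (S : Set (Fin l → Bool))
    (htop : ∀ B ∈ S, ∀ B' ∉ S, probSeq l pb B' < probSeq l pb B) :
    ∀ B₁ B₂ : Fin l → Bool, B₂ ∈ S → flipSet l pb B₁ ⊆ flipSet l pb B₂ → B₁ ∈ S :=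
  top_set_downward_closed_general l pb hpb S htop
end

section
/- (Correctness of sorting positions by flip ratio.) For a Boolean sequence B : Fin l → Bool and positions u, v ∉ F(B), the one-flip successor at u has probability at least that of the one-flip successor at v if and only if V u ≥ V v; that is, P(Function.update B u (¬ B u)) ≥ P(Function.update B v (¬ B v)) ↔ V u ≥ V v. In particular, among all one-flip successors of B, the most probable one flips an unflipped position with maximal flip ratio V. -/
open scoped Classical
open Finset

/-!
Flipping a position `u` outside the flip set moves its factor in `P(B)` from the likelier
outcome `max (pb u) (1 - pb u)` to the less likely one `min (pb u) (1 - pb u)`, so it multiplies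
`P(B)` by exactly `V u`. As `P(B) > 0`, comparing one-flip successors is comparing flip ratios.
-/

lemma ite_decide_gt_half_eq_max (p : ℝ) :
    (if decide (p > 1 / 2) then p else 1 - p) = max p (1 - p) := by
  by_cases h : p > 1 / 2
  · simp only [h, decide_true, if_true]
    exact (max_eq_left (by linarith)).symm
  · simp only [h, decide_false, Bool.false_eq_true, if_false]
    exact (max_eq_right (by linarith)).symm

lemma ite_not_decide_gt_half_eq_min (p : ℝ) :
    (if !decide (p > 1 / 2) then p else 1 - p) = min p (1 - p) := by
  by_cases h : p > 1 / 2
  · simp only [h, decide_true, Bool.not_true, Bool.false_eq_true, if_false]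
    exact (min_eq_right (by linarith)).symm
  · simp only [h, decide_false, Bool.not_false, if_true]
    exact (min_eq_left (by linarith)).symm

lemma max_self_one_sub_pos (p : ℝ) : 0 < max p (1 - p) := by
  by_contra! h
  linarith [le_max_left p (1 - p), le_max_right p (1 - p)]

lemma probSeq_pos (l : ℕ) (pb : Fin l → ℝ) (hpb : ∀ j, 0 < pb j ∧ pb j < 1)
    (B : Fin l → Bool) : 0 < probSeq l pb B :=
  Finset.prod_pos fun j _ => by
    obtain ⟨hpos, hlt⟩ := hpb j
    split <;> linarith

lemma probSeq_update_flip (l : ℕ) (pb : Fin l → ℝ) (B : Fin l → Bool) (u : Fin l)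
    (hu : u ∉ flipSet l pb B) :
    probSeq l pb (Function.update B u (!B u)) = flipRatio l pb u * probSeq l pb B := by
  have hBu : B u = initSeq l pb u := by simpa [flipSet] using hu
  have hrest : ∏ j ∈ {u}ᶜ, (if Function.update B u (!B u) j then pb j else 1 - pb j) =
      ∏ j ∈ {u}ᶜ, (if B j then pb j else 1 - pb j) :=
    Finset.prod_congr rfl fun j hj => by
      rw [Function.update_of_ne (Finset.mem_compl.mp hj ∘ Finset.mem_singleton.mpr)]
  rw [probSeq, probSeq, Fintype.prod_eq_mul_prod_compl u, Fintype.prod_eq_mul_prod_compl u,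
    hrest, Function.update_self, ← mul_assoc, hBu, initSeq, ite_decide_gt_half_eq_max,
    ite_not_decide_gt_half_eq_min, flipRatio, div_mul_cancel₀ _ (max_self_one_sub_pos _).ne']

/-- correctness of sorting positions by flip ratio: for unflipped
positions `u, v`, the one-flip successor at `u` is at least as probable as the one at
`v` iff `V u ≥ V v`; in particular, the most probable one-flip successor flips an
unflipped position with maximal flip ratio. -/
theorem flip_order_iff_ratio_order (l : ℕ) (pb : Fin l → ℝ)
    (hpb : ∀ j, 0 < pb j ∧ pb j < 1)
    (B : Fin l → Bool) (u v : Fin l)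
    (hu : u ∉ flipSet l pb B) (hv : v ∉ flipSet l pb B) :
    (probSeq l pb (Function.update B u (!B u)) ≥
        probSeq l pb (Function.update B v (!B v)) ↔
      flipRatio l pb u ≥ flipRatio l pb v) ∧
    ((∀ w ∉ flipSet l pb B, flipRatio l pb w ≤ flipRatio l pb u) →
      ∀ w ∉ flipSet l pb B,
        probSeq l pb (Function.update B w (!B w)) ≤
          probSeq l pb (Function.update B u (!B u))) := by
  have hP := probSeq_pos l pb hpb B
  refine ⟨?_, fun hmax w hw => ?_⟩
  · rw [probSeq_update_flip l pb B u hu, probSeq_update_flip l pb B v hv]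
    exact mul_le_mul_iff_of_pos_right hP
  · rw [probSeq_update_flip l pb B u hu, probSeq_update_flip l pb B w hw]
    exact mul_le_mul_of_nonneg_right (hmax w hw) hP.le
end
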